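/- arXiv:2204.06622 — 5 statements merged into one kernel-verified Lean document; each statement's English description precedes it below -/
import Mathlib

section
/- For every ε > 0 the continuous linear operator ε·id_F + 𝒢*∘𝒢 on F is invertible (a unit in the ring of continuous linear endomorphisms of F), and the unique minimizer of the Tikhonov functional Φ is given explicitly by f̄ = (ε·id_F + 𝒢*∘𝒢)⁻¹ (𝒢* d). -/
open RealInnerProductSpace ContinuousLinearMap

/-! The operator `ε • id + 𝒢†𝒢` is coercive, `⟪(ε • id + 𝒢†𝒢) v, v⟫ = ε‖v‖² + ‖𝒢 v‖² ≥ ε‖v‖²`,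
hence invertible by Lax–Milgram. If `g` solves the normal equation `(ε • id + 𝒢†𝒢) g = 𝒢† d`,
the cross terms cancel in `Φ (g + h) = Φ g + ½‖𝒢 h‖² + (ε/2)‖h‖²`, so `g` is the unique
minimizer. -/

namespace ContinuousLinearMap

variable {V : Type*} [NormedAddCommGroup V] [InnerProductSpace ℝ V] [CompleteSpace V]

theorem isUnit_of_isCoercive_innerSL_comp {T : V →L[ℝ] V}
    (hT : IsCoercive ((innerSL ℝ).comp T)) : IsUnit T := by
  have hLM : (hT.continuousLinearEquivOfBilin : V →L[ℝ] V) = T :=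
    ext fun v => ext_inner_right ℝ fun w => hT.continuousLinearEquivOfBilin_apply v w
  exact hLM ▸ (ContinuousLinearEquiv.toUnit _).isUnit

end ContinuousLinearMap

noncomputable def tikhonovFunctional {E F : Type*} [NormedAddCommGroup E] [NormedAddCommGroup F]
    [Module ℝ E] [Module ℝ F] (G : E →L[ℝ] F) (d : F) (ε : ℝ) (f : E) : ℝ :=
  1 / 2 * ‖G f - d‖ ^ 2 + ε / 2 * ‖f‖ ^ 2

section Tikhonov

variable {E F : Type*} [NormedAddCommGroup E] [InnerProductSpace ℝ E] [CompleteSpace E]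
  [NormedAddCommGroup F] [InnerProductSpace ℝ F] [CompleteSpace F]
  (G : E →L[ℝ] F) {ε : ℝ}

theorem isCoercive_tikhonov (hε : 0 < ε) :
    IsCoercive ((innerSL ℝ).comp (ε • ContinuousLinearMap.id ℝ E + (adjoint G).comp G)) := by
  refine ⟨ε, hε, fun v => ?_⟩
  calc ε * ‖v‖ * ‖v‖ ≤ ε * ‖v‖ ^ 2 + ‖G v‖ ^ 2 := by nlinarith [sq_nonneg ‖G v‖]
    _ = ⟪ε • v + adjoint G (G v), v⟫ := by
      rw [inner_add_left, real_inner_smul_left, adjoint_inner_left, real_inner_self_eq_norm_sq,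
        real_inner_self_eq_norm_sq]

variable {G} {d : F} {g : E}

theorem tikhonovFunctional_add (hg : ε • g + adjoint G (G g) = adjoint G d) (h : E) :
    tikhonovFunctional G d ε (g + h) =
      tikhonovFunctional G d ε g + 1 / 2 * ‖G h‖ ^ 2 + ε / 2 * ‖h‖ ^ 2 := by
  have hres : adjoint G (G g - d) = -ε • g := by
    rw [map_sub, ← hg]; module
  have cross : ⟪G g - d, G h⟫ = -(ε * ⟪g, h⟫) := by
    rw [← adjoint_inner_left, hres, real_inner_smul_left, neg_mul]
  have hsplit : G (g + h) - d = (G g - d) + G h := by rw [map_add]; abel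
  simp only [tikhonovFunctional]
  rw [hsplit, norm_add_sq_real, norm_add_sq_real, cross]
  ring

theorem forall_tikhonovFunctional_le_iff (hε : 0 < ε)
    (hg : ε • g + adjoint G (G g) = adjoint G d) (fbar : E) :
    (∀ f, tikhonovFunctional G d ε fbar ≤ tikhonovFunctional G d ε f) ↔ fbar = g := by
  have hdecomp : ∀ f, tikhonovFunctional G d ε f =
      tikhonovFunctional G d ε g + 1 / 2 * ‖G (f - g)‖ ^ 2 + ε / 2 * ‖f - g‖ ^ 2 := fun f => by
    rw [← tikhonovFunctional_add hg, add_sub_cancel]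
  constructor
  · intro hmin
    have hle := hmin g
    rw [hdecomp fbar] at hle
    have hdist : ‖fbar - g‖ ^ 2 ≤ 0 := by nlinarith [sq_nonneg ‖G (fbar - g)‖]
    simpa [sub_eq_zero] using hdist
  · rintro rfl f
    rw [hdecomp f]
    nlinarith [sq_nonneg ‖G (f - fbar)‖, sq_nonneg ‖f - fbar‖]

end Tikhonov

theorem tikhonov_minimizer_explicit_formula_general
    {F : Type*} [NormedAddCommGroup F] [InnerProductSpace ℝ F] [CompleteSpace F]
    (K : ℕ)
    (𝒢 : F →L[ℝ] EuclideanSpace ℝ (Fin K)) (d : EuclideanSpace ℝ (Fin K))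
    (ε : ℝ) (hε : 0 < ε)
    (Φ : F → ℝ)
    (hΦ : ∀ f : F, Φ f = (1 / 2) * ‖𝒢 f - d‖ ^ 2 + (ε / 2) * ‖f‖ ^ 2)
    (T : F →L[ℝ] F)
    (hT : T = ε • ContinuousLinearMap.id ℝ F + (ContinuousLinearMap.adjoint 𝒢).comp 𝒢) :
    ∃ hTunit : IsUnit T,
      ∀ fbar : F,
        (∀ f : F, Φ fbar ≤ Φ f) ↔
          fbar = (↑hTunit.unit⁻¹ : F →L[ℝ] F) ((ContinuousLinearMap.adjoint 𝒢) d) := by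
  subst hT
  have hunit := isUnit_of_isCoercive_innerSL_comp (isCoercive_tikhonov 𝒢 hε)
  obtain rfl : Φ = tikhonovFunctional 𝒢 d ε := funext hΦ
  -- `T (T⁻¹ (𝒢† d)) = 𝒢† d` is the normal equation for `T⁻¹ (𝒢† d)`.
  exact ⟨hunit, forall_tikhonovFunctional_le_iff hε (DFunLike.congr_fun hunit.mul_val_inv _)⟩

/-- For every `ε > 0` the operator `ε·id + 𝒢*∘𝒢` is a unit in the ring of continuous
linear endomorphisms of `F`, and the unique minimizer of the Tikhonov functional is
`f̄ = (ε·id + 𝒢*∘𝒢)⁻¹ (𝒢* d)`. -/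
theorem tikhonov_minimizer_explicit_formula
    {F : Type*} [NormedAddCommGroup F] [InnerProductSpace ℝ F] [CompleteSpace F]
    (K : ℕ) (hK : 0 < K)
    (𝒢 : F →L[ℝ] EuclideanSpace ℝ (Fin K)) (d : EuclideanSpace ℝ (Fin K))
    (ε : ℝ) (hε : 0 < ε)
    (Φ : F → ℝ)
    (hΦ : ∀ f : F, Φ f = (1 / 2) * ‖𝒢 f - d‖ ^ 2 + (ε / 2) * ‖f‖ ^ 2)
    (T : F →L[ℝ] F)
    (hT : T = ε • ContinuousLinearMap.id ℝ F + (ContinuousLinearMap.adjoint 𝒢).comp 𝒢) :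
    ∃ hTunit : IsUnit T,
      ∀ fbar : F,
        (∀ f : F, Φ fbar ≤ Φ f) ↔
          fbar = (↑hTunit.unit⁻¹ : F →L[ℝ] F) ((ContinuousLinearMap.adjoint 𝒢) d) :=
  tikhonov_minimizer_explicit_formula_general K 𝒢 d ε hε Φ hΦ T hT
end

section
/- A feasible pair (f, u) minimizes Ψ over all feasible pairs if and only if there exists a Lagrange multiplier λ ∈ U such that the following variational system holds: (i) ε⟨f, φ⟩_F = b(φ, λ) for all φ ∈ F; (ii) e(u, μ) = b(f, μ) for all μ ∈ U; (iii) e(λ, v) = ⟨d − Q u, Q v⟩ for all v ∈ U. (Abstract form of the paper's Proposition 2: equivalence of the constrained optimization problem and the Euler–Lagrange variational system.) -/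
/-!
The feasible pairs form a translate of the subspace of feasible directions
`(φ, w)`, `e(w, ·) = b(φ, ·)`, and `Ψ` is a convex quadratic along every line, so `(f, u)`
is a minimizer iff the first variation `ε⟪f, φ⟫ - ⟪d - Q u, Q w⟫` vanishes on all feasible
directions. By Lax–Milgram every `φ` has a feasible partner `w`, and the adjoint state `λ`
solving (iii) gives `⟪d - Q u, Q w⟫ = e(λ, w) = e(w, λ) = b(φ, λ)` by symmetry of `e`; so the
vanishing of the first variation is exactly (i).
-/

open scoped RealInnerProductSpace

theorem eq_zero_of_forall_mul_sq_add_mul_nonneg {a b : ℝ} (h : ∀ t : ℝ, 0 ≤ a * t ^ 2 + b * t) :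
    b = 0 := by
  have hdiscrim := discrim_le_zero (a := a) (b := b) (c := 0) fun t => by simpa [sq] using h t
  rw [discrim] at hdiscrim
  nlinarith [sq_nonneg b]

theorem forall_sub_mem_le_iff_of_quadratic {M : Type*} [AddCommGroup M] [Module ℝ M]
    {S : Submodule ℝ M} {ψ D A : M → ℝ} {x : M} (hA : ∀ h ∈ S, 0 ≤ A h)
    (hψ : ∀ (h : M) (t : ℝ), ψ (x + t • h) = ψ x + t * D h + t ^ 2 * A h) :
    (∀ y, y - x ∈ S → ψ x ≤ ψ y) ↔ ∀ h ∈ S, D h = 0 := by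
  constructor
  · intro hmin h hS
    refine eq_zero_of_forall_mul_sq_add_mul_nonneg (a := A h) fun t => ?_
    have hle := hmin (x + t • h) (by simpa using S.smul_mem t hS)
    rw [hψ] at hle
    linarith
  · intro hD y hy
    have hy' := hψ (y - x) 1
    rw [one_smul, add_sub_cancel] at hy'
    rw [hy', hD _ hy]
    linarith [hA _ hy]

theorem norm_add_smul_sq {V : Type*} [NormedAddCommGroup V] [InnerProductSpace ℝ V]
    (x y : V) (t : ℝ) : ‖x + t • y‖ ^ 2 = ‖x‖ ^ 2 + t * (2 * ⟪x, y⟫) + t ^ 2 * ‖y‖ ^ 2 := by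
  rw [norm_add_sq_real, real_inner_smul_right, norm_smul, mul_pow, Real.norm_eq_abs, sq_abs]
  ring

section

variable {U : Type*} [NormedAddCommGroup U] [InnerProductSpace ℝ U]

theorem IsCoercive.exists_forall_apply_eq [CompleteSpace U] {B : U →L[ℝ] U →L[ℝ] ℝ}
    (hB : IsCoercive B) (ℓ : U →L[ℝ] ℝ) : ∃ x, ∀ v, B x v = ℓ v := by
  refine ⟨hB.continuousLinearEquivOfBilin.symm ((InnerProductSpace.toDual ℝ U).symm ℓ),
    fun v => ?_⟩
  rw [← hB.continuousLinearEquivOfBilin_apply, ContinuousLinearEquiv.apply_symm_apply,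
    InnerProductSpace.toDual_symm_apply]

theorem LinearMap.exists_forall_apply_eq_of_coercive [CompleteSpace U]
    (e : U →ₗ[ℝ] U →ₗ[ℝ] ℝ) (hbd : ∃ C : ℝ, ∀ u v : U, |e u v| ≤ C * ‖u‖ * ‖v‖)
    {c : ℝ} (hc : 0 < c) (hcoer : ∀ v : U, c * ‖v‖ ^ 2 ≤ e v v) (ℓ : U →L[ℝ] ℝ) :
    ∃ x, ∀ v, e x v = ℓ v := by
  obtain ⟨C, hC⟩ := hbd
  have hB : IsCoercive (e.mkContinuous₂ C fun u v => (Real.norm_eq_abs _).trans_le (hC u v)) :=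
    ⟨c, hc, fun v => by simpa [sq, mul_assoc] using hcoer v⟩
  exact hB.exists_forall_apply_eq ℓ

variable {F : Type*} [AddCommGroup F] [Module ℝ F]

theorem forall_constraint_eq_iff_exists_multiplier (e : U →ₗ[ℝ] U →ₗ[ℝ] ℝ)
    (hsymm : ∀ u v, e u v = e v u) (hsolve : ∀ ℓ : U →L[ℝ] ℝ, ∃ x, ∀ v, e x v = ℓ v)
    (b : F →ₗ[ℝ] U →ₗ[ℝ] ℝ) (hb : ∀ φ, Continuous (b φ)) (h : F → ℝ) (g : U →L[ℝ] ℝ) :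
    (∀ φ w, (∀ μ, e w μ = b φ μ) → h φ = g w) ↔
      ∃ lam, (∀ φ, h φ = b φ lam) ∧ ∀ v, e lam v = g v := by
  constructor
  · intro hhg
    obtain ⟨lam, hlam⟩ := hsolve g
    refine ⟨lam, fun φ => ?_, hlam⟩
    obtain ⟨w, hw⟩ := hsolve ⟨b φ, hb φ⟩
    rw [hhg φ w hw, ← hlam, hsymm]
    exact hw lam
  · rintro ⟨lam, hh, hlam⟩ φ w hw
    rw [hh, ← hw, hsymm, hlam]

def feasibleDirections (e : U →ₗ[ℝ] U →ₗ[ℝ] ℝ) (b : F →ₗ[ℝ] U →ₗ[ℝ] ℝ) : Submodule ℝ (F × U) :=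
  LinearMap.ker (e ∘ₗ LinearMap.snd ℝ F U - b ∘ₗ LinearMap.fst ℝ F U)

theorem mem_feasibleDirections {e : U →ₗ[ℝ] U →ₗ[ℝ] ℝ} {b : F →ₗ[ℝ] U →ₗ[ℝ] ℝ} {p : F × U} :
    p ∈ feasibleDirections e b ↔ ∀ μ, e p.2 μ = b p.1 μ := by
  simp [feasibleDirections, sub_eq_zero, LinearMap.ext_iff]

theorem sub_mem_feasibleDirections_iff {e : U →ₗ[ℝ] U →ₗ[ℝ] ℝ} {b : F →ₗ[ℝ] U →ₗ[ℝ] ℝ}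
    {f f' : F} {u u' : U} (hfeas : ∀ μ, e u μ = b f μ) :
    (f', u') - (f, u) ∈ feasibleDirections e b ↔ ∀ μ, e u' μ = b f' μ := by
  simp [mem_feasibleDirections, hfeas]

end

theorem feasible_pair_minimizes_iff_lagrange_multiplier_general
    {F U : Type*}
    [NormedAddCommGroup F] [InnerProductSpace ℝ F]
    [NormedAddCommGroup U] [InnerProductSpace ℝ U] [CompleteSpace U]
    (K : ℕ)
    (e : U →ₗ[ℝ] U →ₗ[ℝ] ℝ)
    (hebd : ∃ Ce : ℝ, ∀ u v : U, |e u v| ≤ Ce * ‖u‖ * ‖v‖)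
    (hesymm : ∀ u v : U, e u v = e v u)
    (c : ℝ) (hc : 0 < c) (hecoer : ∀ v : U, c * ‖v‖ ^ 2 ≤ e v v)
    (b : F →ₗ[ℝ] U →ₗ[ℝ] ℝ)
    (hbbd : ∃ Cb : ℝ, ∀ (f : F) (v : U), |b f v| ≤ Cb * ‖f‖ * ‖v‖)
    (Q : U →L[ℝ] EuclideanSpace ℝ (Fin K)) (d : EuclideanSpace ℝ (Fin K))
    (ε : ℝ) (hε : 0 < ε)
    (Ψ : F → U → ℝ)
    (hΨ : ∀ (f : F) (u : U), Ψ f u = (1 / 2) * ‖Q u - d‖ ^ 2 + (ε / 2) * ‖f‖ ^ 2)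
    (f : F) (u : U)
    (hfeas : ∀ μ : U, e u μ = b f μ) :
    (∀ (f' : F) (u' : U), (∀ μ : U, e u' μ = b f' μ) → Ψ f u ≤ Ψ f' u') ↔
      ∃ lam : U,
        (∀ φ : F, ε * ⟪f, φ⟫ = b φ lam) ∧
        (∀ μ : U, e u μ = b f μ) ∧
        (∀ v : U, e lam v = ⟪d - Q u, Q v⟫) := by
  obtain ⟨Cb, hCb⟩ := hbbd
  have hb : ∀ φ, Continuous (b φ) := fun φ =>
    AddMonoidHomClass.continuous_of_bound (b φ) (Cb * ‖φ‖) fun v =>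
      (Real.norm_eq_abs _).trans_le (hCb φ v)
  have hexpand : ∀ (p : F × U) (t : ℝ), Ψ (f + t • p.1) (u + t • p.2) =
      Ψ f u + t * (ε * ⟪f, p.1⟫ - ⟪d - Q u, Q p.2⟫) +
        t ^ 2 * ((1 / 2) * ‖Q p.2‖ ^ 2 + ε / 2 * ‖p.1‖ ^ 2) := by
    intro p t
    rw [hΨ, hΨ, map_add, map_smul, add_sub_right_comm, norm_add_smul_sq, norm_add_smul_sq,
      ← neg_sub d (Q u), inner_neg_left]
    ring
  have hcurv : ∀ p ∈ feasibleDirections e b, 0 ≤ (1 / 2) * ‖Q p.2‖ ^ 2 + ε / 2 * ‖p.1‖ ^ 2 :=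
    fun p _ => by positivity
  have hmin : (∀ (f' : F) (u' : U), (∀ μ, e u' μ = b f' μ) → Ψ f u ≤ Ψ f' u') ↔
      ∀ y : F × U, y - (f, u) ∈ feasibleDirections e b → Ψ f u ≤ Ψ y.1 y.2 := by
    simp only [Prod.forall, sub_mem_feasibleDirections_iff hfeas]
  rw [hmin, forall_sub_mem_le_iff_of_quadratic (ψ := fun y => Ψ y.1 y.2) hcurv hexpand]
  simp only [Prod.forall, mem_feasibleDirections, sub_eq_zero]
  exact (forall_constraint_eq_iff_exists_multiplier e hesymm
    (e.exists_forall_apply_eq_of_coercive hebd hc hecoer) b hb (fun φ => ε * ⟪f, φ⟫)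
    ((innerSL ℝ (d - Q u)).comp Q)).trans <| exists_congr fun lam =>
      ⟨fun ⟨hi, hiii⟩ => ⟨hi, hfeas, hiii⟩, fun ⟨hi, _, hiii⟩ => ⟨hi, hiii⟩⟩

/-- Abstract form of the paper's Proposition 2: a feasible pair `(f, u)` minimizes `Ψ`
over all feasible pairs iff there exists a Lagrange multiplier `λ` such that the
Euler–Lagrange variational system (i)–(iii) holds. -/
theorem feasible_pair_minimizes_iff_lagrange_multiplier
    {F U : Type*}
    [NormedAddCommGroup F] [InnerProductSpace ℝ F] [CompleteSpace F]
    [NormedAddCommGroup U] [InnerProductSpace ℝ U] [CompleteSpace U]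
    (K : ℕ) (hK : 0 < K)
    (e : U →ₗ[ℝ] U →ₗ[ℝ] ℝ)
    (hebd : ∃ Ce : ℝ, ∀ u v : U, |e u v| ≤ Ce * ‖u‖ * ‖v‖)
    (hesymm : ∀ u v : U, e u v = e v u)
    (c : ℝ) (hc : 0 < c) (hecoer : ∀ v : U, c * ‖v‖ ^ 2 ≤ e v v)
    (b : F →ₗ[ℝ] U →ₗ[ℝ] ℝ)
    (hbbd : ∃ Cb : ℝ, ∀ (f : F) (v : U), |b f v| ≤ Cb * ‖f‖ * ‖v‖)
    (Q : U →L[ℝ] EuclideanSpace ℝ (Fin K)) (d : EuclideanSpace ℝ (Fin K))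
    (ε : ℝ) (hε : 0 < ε)
    (Ψ : F → U → ℝ)
    (hΨ : ∀ (f : F) (u : U), Ψ f u = (1 / 2) * ‖Q u - d‖ ^ 2 + (ε / 2) * ‖f‖ ^ 2)
    (f : F) (u : U)
    (hfeas : ∀ μ : U, e u μ = b f μ) :
    (∀ (f' : F) (u' : U), (∀ μ : U, e u' μ = b f' μ) → Ψ f u ≤ Ψ f' u') ↔
      ∃ lam : U,
        (∀ φ : F, ε * ⟪f, φ⟫ = b φ lam) ∧
        (∀ μ : U, e u μ = b f μ) ∧
        (∀ v : U, e lam v = ⟪d - Q u, Q v⟫) :=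
  feasible_pair_minimizes_iff_lagrange_multiplier_general K e hebd hesymm c hc hecoer b hbbd Q d ε
    hε Ψ hΨ f u hfeas
end

section
/- The Euler–Lagrange variational system has exactly one solution: there exists a unique triple (f, λ, u) ∈ F × U × U satisfying (i) ε⟨f, φ⟩_F = b(φ, λ) for all φ ∈ F; (ii) e(u, μ) = b(f, μ) for all μ ∈ U; (iii) e(λ, v) = ⟨d − Q u, Q v⟩ for all v ∈ U. (This justifies the paper's claim that EEG source estimation is performed by a single linear solve.) -/
/-!
Solving the state equation `e(u, ·) = b(f, ·)` and the adjoint equation by Lax–Milgram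
eliminates `u` and `λ`, and (i) becomes the normal equation `(ε + T†T) f = T† d` of Tikhonov
regularization for the observation map `T = Q E⁻¹ B`, where `E` and `B` are the Riesz
operators of `e` and `b`; the identification uses that `E⁻¹` is self-adjoint, which is where
the symmetry of `e` enters. Since `⟪(ε + T†T) f, f⟫ ≥ ε ‖f‖²`, Lax–Milgram applies once more and
the normal equation has exactly one solution.
-/

open scoped RealInnerProductSpace

open ContinuousLinearMap

theorem ext_iff_real_inner_right {E : Type*} [NormedAddCommGroup E] [InnerProductSpace ℝ E]
    {x y : E} : x = y ↔ ∀ w, ⟪x, w⟫ = ⟪y, w⟫ :=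
  ⟨fun h _ => h ▸ rfl, ext_inner_right ℝ⟩

section

variable {F U H : Type*}
  [NormedAddCommGroup F] [InnerProductSpace ℝ F] [CompleteSpace F]
  [NormedAddCommGroup U] [InnerProductSpace ℝ U] [CompleteSpace U]
  [NormedAddCommGroup H] [InnerProductSpace ℝ H] [CompleteSpace H]

theorem ContinuousLinearMap.bijective_of_inner_coercive {S : F →L[ℝ] F} {c : ℝ} (hc : 0 < c)
    (hS : ∀ f, c * ‖f‖ * ‖f‖ ≤ ⟪S f, f⟫) : Function.Bijective S := by
  have hcoer : IsCoercive ((innerSL ℝ : F →L[ℝ] F →L[ℝ] ℝ) ∘L S) := ⟨c, hc, hS⟩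
  have hG : ⇑hcoer.continuousLinearEquivOfBilin = S := funext fun f =>
    ext_inner_right ℝ fun w => hcoer.continuousLinearEquivOfBilin_apply f w
  exact hG ▸ hcoer.continuousLinearEquivOfBilin.bijective

theorem ContinuousLinearMap.bijective_smul_id_add_adjoint_comp_self (T : F →L[ℝ] H) {ε : ℝ}
    (hε : 0 < ε) : Function.Bijective (ε • ContinuousLinearMap.id ℝ F + adjoint T ∘L T) := by
  refine bijective_of_inner_coercive hε fun f => ?_
  have hTf : 0 ≤ ⟪T f, T f⟫ := real_inner_self_nonneg
  simp only [add_apply, smul_apply, id_apply, comp_apply, inner_add_left,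
    real_inner_smul_left, adjoint_inner_left, real_inner_self_eq_norm_mul_norm]
  nlinarith

theorem IsCoercive.isSelfAdjoint_continuousLinearEquivOfBilin {B : U →L[ℝ] U →L[ℝ] ℝ}
    (hB : IsCoercive B) (hsymm : ∀ u v, B u v = B v u) :
    IsSelfAdjoint (hB.continuousLinearEquivOfBilin : U →L[ℝ] U) :=
  isSelfAdjoint_iff_isSymmetric.mpr fun u v => by
    change ⟪hB.continuousLinearEquivOfBilin u, v⟫ = ⟪u, hB.continuousLinearEquivOfBilin v⟫
    rw [← real_inner_comm u, hB.continuousLinearEquivOfBilin_apply,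
      hB.continuousLinearEquivOfBilin_apply, hsymm]

theorem IsSelfAdjoint.continuousLinearEquiv_symm {A : U ≃L[ℝ] U}
    (hA : IsSelfAdjoint (A : U →L[ℝ] U)) :
    IsSelfAdjoint (A.symm : U →L[ℝ] U) :=
  isSelfAdjoint_iff_isSymmetric.mpr fun u v => by
    have := (isSelfAdjoint_iff_isSymmetric.mp hA) (A.symm u) (A.symm v)
    simpa using this.symm

theorem existsUnique_tikhonov_optimality_system (B : F →L[ℝ] U) (A : U ≃L[ℝ] U)
    (hA : IsSelfAdjoint (A : U →L[ℝ] U)) (Q : U →L[ℝ] H) (d : H) {ε : ℝ} (hε : 0 < ε) :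
    ∃! t : F × U × U,
      ε • t.1 = adjoint B t.2.1 ∧ A t.2.2 = B t.1 ∧ A t.2.1 = adjoint Q (d - Q t.2.2) := by
  set G : U →L[ℝ] U := ↑A.symm
  set T := Q ∘L G ∘L B
  have hTadj : adjoint T = adjoint B ∘L G ∘L adjoint Q := by
    rw [adjoint_comp, adjoint_comp, hA.continuousLinearEquiv_symm.adjoint_eq, comp_assoc]
  have hsystem_iff : ∀ f l u, (ε • f = adjoint B l ∧ A u = B f ∧ A l = adjoint Q (d - Q u)) ↔
      (ε • f + adjoint T (T f) = adjoint T d ∧ l = G (adjoint Q (d - Q u)) ∧ u = G (B f)) := by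
    intro f l u
    rw [and_comm (a := A u = B f), ← A.eq_symm_apply, ← A.eq_symm_apply]
    refine and_congr_left fun ⟨hl, hu⟩ => ?_
    subst hl hu
    rw [← eq_sub_iff_add_eq, ← map_sub, hTadj]
    rfl
  have hS := bijective_smul_id_add_adjoint_comp_self T hε
  obtain ⟨f₀, hf₀⟩ := hS.surjective (adjoint T d)
  refine ⟨(f₀, G (adjoint Q (d - Q (G (B f₀)))), G (B f₀)),
    (hsystem_iff _ _ _).mpr ⟨hf₀, rfl, rfl⟩, ?_⟩
  rintro ⟨f, l, u⟩ h
  obtain ⟨hf, rfl, rfl⟩ := (hsystem_iff f l u).mp h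
  obtain rfl : f = f₀ := hS.injective (hf.trans hf₀.symm)
  rfl

end

theorem euler_lagrange_system_exists_unique_solution_general
    {F U : Type*}
    [NormedAddCommGroup F] [InnerProductSpace ℝ F] [CompleteSpace F]
    [NormedAddCommGroup U] [InnerProductSpace ℝ U] [CompleteSpace U]
    (K : ℕ)
    (e : U →ₗ[ℝ] U →ₗ[ℝ] ℝ)
    (hebd : ∃ Ce : ℝ, ∀ u v : U, |e u v| ≤ Ce * ‖u‖ * ‖v‖)
    (hesymm : ∀ u v : U, e u v = e v u)
    (c : ℝ) (hc : 0 < c) (hecoer : ∀ v : U, c * ‖v‖ ^ 2 ≤ e v v)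
    (b : F →ₗ[ℝ] U →ₗ[ℝ] ℝ)
    (hbbd : ∃ Cb : ℝ, ∀ (f : F) (v : U), |b f v| ≤ Cb * ‖f‖ * ‖v‖)
    (Q : U →L[ℝ] EuclideanSpace ℝ (Fin K)) (d : EuclideanSpace ℝ (Fin K))
    (ε : ℝ) (hε : 0 < ε) :
    ∃! t : F × U × U,
      (∀ φ : F, ε * ⟪t.1, φ⟫ = b φ t.2.1) ∧
      (∀ μ : U, e t.2.2 μ = b t.1 μ) ∧
      (∀ v : U, e t.2.1 v = ⟪d - Q t.2.2, Q v⟫) := by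
  obtain ⟨Ce, hCe⟩ := hebd
  obtain ⟨Cb, hCb⟩ := hbbd
  set e' := e.mkContinuous₂ Ce hCe
  have hcoer : IsCoercive e' := ⟨c, hc, fun v => by simpa [e', mul_assoc, sq] using hecoer v⟩
  set A := hcoer.continuousLinearEquivOfBilin
  have hA (u w : U) : e u w = ⟪A u, w⟫ := (hcoer.continuousLinearEquivOfBilin_apply u w).symm
  set B : F →L[ℝ] U :=
    (((InnerProductSpace.toDual ℝ U).symm.toContinuousLinearEquiv :
      StrongDual ℝ U →SL[starRingEnd ℝ] U) : StrongDual ℝ U →L[ℝ] U) ∘L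
      b.mkContinuous₂ Cb hCb
  have hB (φ : F) (μ : U) : b φ μ = ⟪B φ, μ⟫ :=
    (InnerProductSpace.toDual_symm_apply (y := b.mkContinuous₂ Cb hCb φ)).symm
  have hB_adjoint (φ : F) (μ : U) : b φ μ = ⟪adjoint B μ, φ⟫ := by
    rw [adjoint_inner_left, real_inner_comm, hB]
  refine (existsUnique_congr fun t => and_congr ?_ (and_congr ?_ ?_)).mpr
    (existsUnique_tikhonov_optimality_system B A
      (hcoer.isSelfAdjoint_continuousLinearEquivOfBilin hesymm) Q d hε)
  · simp_rw [hB_adjoint, ← real_inner_smul_left]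
    exact ext_iff_real_inner_right.symm
  · simp_rw [hA, hB]
    exact ext_iff_real_inner_right.symm
  · simp_rw [hA, ← adjoint_inner_left]
    exact ext_iff_real_inner_right.symm

/-- The Euler–Lagrange variational system has exactly one solution `(f, λ, u)`,
so EEG source estimation is performed by a single linear solve. -/
theorem euler_lagrange_system_exists_unique_solution
    {F U : Type*}
    [NormedAddCommGroup F] [InnerProductSpace ℝ F] [CompleteSpace F]
    [NormedAddCommGroup U] [InnerProductSpace ℝ U] [CompleteSpace U]
    (K : ℕ) (hK : 0 < K)
    (e : U →ₗ[ℝ] U →ₗ[ℝ] ℝ)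
    (hebd : ∃ Ce : ℝ, ∀ u v : U, |e u v| ≤ Ce * ‖u‖ * ‖v‖)
    (hesymm : ∀ u v : U, e u v = e v u)
    (c : ℝ) (hc : 0 < c) (hecoer : ∀ v : U, c * ‖v‖ ^ 2 ≤ e v v)
    (b : F →ₗ[ℝ] U →ₗ[ℝ] ℝ)
    (hbbd : ∃ Cb : ℝ, ∀ (f : F) (v : U), |b f v| ≤ Cb * ‖f‖ * ‖v‖)
    (Q : U →L[ℝ] EuclideanSpace ℝ (Fin K)) (d : EuclideanSpace ℝ (Fin K))
    (ε : ℝ) (hε : 0 < ε) :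
    ∃! t : F × U × U,
      (∀ φ : F, ε * ⟪t.1, φ⟫ = b φ t.2.1) ∧
      (∀ μ : U, e t.2.2 μ = b t.1 μ) ∧
      (∀ v : U, e t.2.1 v = ⟪d - Q t.2.2, Q v⟫) :=
  euler_lagrange_system_exists_unique_solution_general K e hebd hesymm c hc hecoer b hbbd Q d ε hε
end

section
/- The Karush–Kuhn–Tucker block matrix 𝕄 = [[A, −Bᵀ, 0], [−B, 0, Eᵀ], [0, E, G]] (a square real matrix of size M + N + N, acting on vectors (f, λ, u)) is invertible: if A f = Bᵀ λ, B f = Eᵀ u, and E λ + G u = 0, then f = 0, λ = 0, and u = 0. -/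
/-!
Pairing the three equations with `f`, `u` and `λ` shows that the two quadratic forms add up
to zero: `f ⬝ A f = f ⬝ Bᵀ λ = (B f) ⬝ λ = (Eᵀ u) ⬝ λ = u ⬝ E λ = -(u ⬝ G u)`. As `A` is positive
definite and `G` positive semidefinite, this forces `f = 0`; then `Eᵀ u = B f = 0` and
`E λ = -G u = 0`, and invertibility of `E` gives `u = 0` and `λ = 0`.
-/

open Matrix

namespace Matrix

variable {m n R : Type*} [Fintype m] [Fintype n]

theorem kkt_dotProduct_mulVec_add_dotProduct_mulVec_eq_zero [CommRing R]
    {A : Matrix m m R} {B : Matrix n m R} {E G : Matrix n n R} {f : m → R} {lam u : n → R}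
    (h1 : A *ᵥ f = Bᵀ *ᵥ lam) (h2 : B *ᵥ f = Eᵀ *ᵥ u) (h3 : E *ᵥ lam + G *ᵥ u = 0) :
    f ⬝ᵥ A *ᵥ f + u ⬝ᵥ G *ᵥ u = 0 := by
  have hpair : f ⬝ᵥ A *ᵥ f = u ⬝ᵥ E *ᵥ lam := by
    calc f ⬝ᵥ A *ᵥ f = B *ᵥ f ⬝ᵥ lam := by
          rw [h1, dotProduct_mulVec, ← mulVec_transpose, transpose_transpose]
      _ = u ⬝ᵥ E *ᵥ lam := by rw [h2, mulVec_transpose, dotProduct_mulVec]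
  rw [hpair, ← dotProduct_add, h3, dotProduct_zero]

theorem PosDef.eq_zero_of_dotProduct_mulVec_add_eq_zero
    {A : Matrix m m ℝ} {G : Matrix n n ℝ} (hA : A.PosDef) (hG : G.PosSemidef)
    {f : m → ℝ} {u : n → ℝ} (h : f ⬝ᵥ A *ᵥ f + u ⬝ᵥ G *ᵥ u = 0) : f = 0 := by
  by_contra hf
  have hAf : 0 < f ⬝ᵥ A *ᵥ f := hA.dotProduct_mulVec_pos hf
  have hGu : 0 ≤ u ⬝ᵥ G *ᵥ u := hG.dotProduct_mulVec_nonneg u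
  linarith

end Matrix

theorem kkt_block_matrix_kernel_trivial_general
    (M N : ℕ)
    (A : Matrix (Fin M) (Fin M) ℝ) (hA : A.PosDef)
    (B : Matrix (Fin N) (Fin M) ℝ)
    (E : Matrix (Fin N) (Fin N) ℝ) (hE : IsUnit E)
    (G : Matrix (Fin N) (Fin N) ℝ) (hG : G.PosSemidef)
    (f : Fin M → ℝ) (lam u : Fin N → ℝ)
    (h1 : A *ᵥ f = Bᵀ *ᵥ lam)
    (h2 : B *ᵥ f = Eᵀ *ᵥ u)
    (h3 : E *ᵥ lam + G *ᵥ u = 0) :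
    f = 0 ∧ lam = 0 ∧ u = 0 := by
  have hf : f = 0 := hA.eq_zero_of_dotProduct_mulVec_add_eq_zero hG
    (kkt_dotProduct_mulVec_add_dotProduct_mulVec_eq_zero h1 h2 h3)
  have hdet : E.det ≠ 0 := ((isUnit_iff_isUnit_det E).mp hE).ne_zero
  have hu : u = 0 := eq_zero_of_mulVec_eq_zero (by rwa [det_transpose])
    (by rw [← h2, hf, mulVec_zero])
  have hlam : lam = 0 := eq_zero_of_mulVec_eq_zero hdet (by simpa [hu] using h3)
  exact ⟨hf, hlam, hu⟩

/-- The KKT block matrix `𝕄 = [[A, −Bᵀ, 0], [−B, 0, Eᵀ], [0, E, G]]` is invertible: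
if `A f = Bᵀ λ`, `B f = Eᵀ u`, and `E λ + G u = 0`, then `f = 0`, `λ = 0`, `u = 0`. -/
theorem kkt_block_matrix_kernel_trivial
    (M N : ℕ) (hM : 0 < M) (hN : 0 < N)
    (A : Matrix (Fin M) (Fin M) ℝ) (hA : A.PosDef)
    (B : Matrix (Fin N) (Fin M) ℝ)
    (E : Matrix (Fin N) (Fin N) ℝ) (hE : IsUnit E)
    (G : Matrix (Fin N) (Fin N) ℝ) (hG : G.PosSemidef)
    (f : Fin M → ℝ) (lam u : Fin N → ℝ)
    (h1 : A *ᵥ f = Bᵀ *ᵥ lam)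
    (h2 : B *ᵥ f = Eᵀ *ᵥ u)
    (h3 : E *ᵥ lam + G *ᵥ u = 0) :
    f = 0 ∧ lam = 0 ∧ u = 0 :=
  kkt_block_matrix_kernel_trivial_general M N A hA B E hE G hG f lam u h1 h2 h3
end

section
/- (Constrained-set approximation lemma, used to pass from the kernel infimum to the full-subspace infimum, cf. Braess Remark 4.10) For every x ∈ X and every y_h ∈ X_h there exists z_h ∈ X_h with b(x − z_h, μ_h) = 0 for all μ_h ∈ M_h and ‖x − z_h‖ ≤ (1 + β₂/β₁) ‖x − y_h‖. In particular the discrete constrained set K_h = { z_h ∈ X_h : b(x − z_h, μ_h) = 0 for all μ_h ∈ M_h } is nonempty and inf over z_h ∈ K_h of ‖x − z_h‖ is at most (1 + β₂/β₁) · (infimum over y_h ∈ X_h of ‖x − y_h‖). -/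
/-!
Represent `w ↦ b(w, ·)` on `M_h` by a linear map `G : X → M_h` (Riesz) and let `A = G|_{X_h}`.
The discrete inf-sup condition says `β₁ ‖μ‖ ≤ ‖A* μ‖`, so `A A*` is injective, hence invertible
on the finite-dimensional `M_h`. If `A A* ν = G (x - y_h)`, then `v = A* ν ∈ X_h` satisfies
`A v = G (x - y_h)` and `‖v‖² = ⟪ν, G (x - y_h)⟫ ≤ ‖v‖ ‖G (x - y_h)‖ / β₁ ≤ ‖v‖ β₂ ‖x - y_h‖ / β₁`,
so `z_h = y_h + v` works.
-/

open RealInnerProductSpace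

section Riesz

variable {E F : Type*} [NormedAddCommGroup E] [InnerProductSpace ℝ E] [FiniteDimensional ℝ E]

noncomputable def rieszOfBilin [AddCommGroup F] [Module ℝ F] (B : E →ₗ[ℝ] F →ₗ[ℝ] ℝ) :
    F →ₗ[ℝ] E :=
  (InnerProductSpace.toDual ℝ E).symm.toLinearEquiv.toLinearMap ∘ₗ
    LinearMap.toContinuousLinearMap.toLinearMap ∘ₗ B.flip

theorem inner_rieszOfBilin_apply [AddCommGroup F] [Module ℝ F] (B : E →ₗ[ℝ] F →ₗ[ℝ] ℝ)
    (w : F) (μ : E) : ⟪rieszOfBilin B w, μ⟫ = B μ w :=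
  InnerProductSpace.toDual_symm_apply

theorem norm_rieszOfBilin_apply_le [SeminormedAddCommGroup F] [Module ℝ F]
    (B : E →ₗ[ℝ] F →ₗ[ℝ] ℝ) {C : ℝ} (hC : 0 ≤ C) (hB : ∀ μ w, |B μ w| ≤ C * ‖w‖ * ‖μ‖)
    (w : F) : ‖rieszOfBilin B w‖ ≤ C * ‖w‖ := by
  rw [rieszOfBilin, LinearMap.comp_apply, LinearEquiv.coe_coe,
    LinearIsometryEquiv.coe_toLinearEquiv, LinearIsometryEquiv.norm_map]
  exact ContinuousLinearMap.opNorm_le_bound _ (by positivity) fun μ => hB μ w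

end Riesz

namespace LinearMap

variable {𝕜 E F : Type*} [RCLike 𝕜] [NormedAddCommGroup E] [InnerProductSpace 𝕜 E]
  [NormedAddCommGroup F] [InnerProductSpace 𝕜 F] [FiniteDimensional 𝕜 E] [FiniteDimensional 𝕜 F]

theorem exists_apply_eq_of_le_norm_adjoint (A : E →ₗ[𝕜] F) {β : ℝ} (hβ : 0 < β)
    (hA : ∀ μ, β * ‖μ‖ ≤ ‖adjoint A μ‖) (g : F) : ∃ v, A v = g ∧ β * ‖v‖ ≤ ‖g‖ := by
  have hinj : Function.Injective (adjoint A) := by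
    refine (injective_iff_map_eq_zero _).2 fun μ hμ => norm_le_zero_iff.1 ?_
    have := hA μ
    rw [hμ, norm_zero] at this
    exact nonpos_of_mul_nonpos_right this hβ
  obtain ⟨ν, hν⟩ : ∃ ν, A (adjoint A ν) = g :=
    injective_iff_surjective (f := A ∘ₗ adjoint A) |>.1
      (by rw [coe_comp, self_comp_adjoint_injective_iff]; exact hinj) g
  refine ⟨adjoint A ν, hν, ?_⟩
  have hsq : ‖adjoint A ν‖ ^ 2 ≤ ‖ν‖ * ‖g‖ := by
    rw [← hν, ← inner_self_eq_norm_sq (𝕜 := 𝕜), adjoint_inner_left]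
    exact (RCLike.re_le_norm _).trans (norm_inner_le_norm _ _)
  rcases (norm_nonneg (adjoint A ν)).eq_or_lt with hv | hv
  · rw [← hv, mul_zero]
    exact norm_nonneg g
  · refine le_of_mul_le_mul_right ?_ hv
    calc β * ‖adjoint A ν‖ * ‖adjoint A ν‖ = β * ‖adjoint A ν‖ ^ 2 := by ring
      _ ≤ β * ‖ν‖ * ‖g‖ := by rw [mul_assoc]; gcongr
      _ ≤ ‖g‖ * ‖adjoint A ν‖ := by rw [mul_comm ‖g‖]; gcongr; exact hA ν

end LinearMap

theorem sInf_le_mul_iInf_of_forall_exists_le {ι : Type*} [Nonempty ι] {S : Set ℝ} {f : ι → ℝ}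
    {c : ℝ} (hS : BddBelow S) (hc : 0 ≤ c) (h : ∀ i, ∃ s ∈ S, s ≤ c * f i) :
    sInf S ≤ c * ⨅ i, f i := by
  rw [Real.mul_iInf_of_nonneg hc]
  refine le_ciInf fun i => ?_
  obtain ⟨s, hs, hs_le⟩ := h i
  exact (csInf_le hS hs).trans hs_le

section SaddlePoint

variable {X M : Type*} [NormedAddCommGroup X] [InnerProductSpace ℝ X]
  [NormedAddCommGroup M] [InnerProductSpace ℝ M]
  (b : X →ₗ[ℝ] M →ₗ[ℝ] ℝ) (X_h : Submodule ℝ X) (M_h : Submodule ℝ M)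
  [FiniteDimensional ℝ X_h] [FiniteDimensional ℝ M_h]

theorem sSup_div_norm_le_norm_adjoint (μ : M_h) :
    sSup {r : ℝ | ∃ y ∈ X_h, y ≠ 0 ∧ r = b y μ / ‖y‖} ≤
      ‖LinearMap.adjoint ((rieszOfBilin (b.flip.domRestrict M_h)).domRestrict X_h) μ‖ := by
  refine Real.sSup_le ?_ (norm_nonneg _)
  rintro _ ⟨y, hy, -, rfl⟩
  refine div_le_of_le_mul₀ (norm_nonneg y) (norm_nonneg _) ?_
  calc b y μ = ⟪(⟨y, hy⟩ : X_h), LinearMap.adjoint _ μ⟫ := by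
        rw [LinearMap.adjoint_inner_right, LinearMap.domRestrict_apply,
          inner_rieszOfBilin_apply]
        rfl
    _ ≤ _ := real_inner_le_norm _ _
    _ = _ := mul_comm _ _

theorem exists_mem_forall_eq_zero_norm_sub_le {β₁ β₂ : ℝ} (hβ₁ : 0 < β₁) (hβ₂ : 0 ≤ β₂)
    (hcont : ∀ (y : X) (μ : M), |b y μ| ≤ β₂ * ‖y‖ * ‖μ‖)
    (hinfsup : ∀ μ_h ∈ M_h,
      β₁ * ‖μ_h‖ ≤ sSup {r : ℝ | ∃ y_h ∈ X_h, y_h ≠ 0 ∧ r = b y_h μ_h / ‖y_h‖})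
    (x : X) {y_h : X} (hy_h : y_h ∈ X_h) :
    ∃ z_h ∈ X_h, (∀ μ_h ∈ M_h, b (x - z_h) μ_h = 0) ∧
      ‖x - z_h‖ ≤ (1 + β₂ / β₁) * ‖x - y_h‖ := by
  let G : X →ₗ[ℝ] M_h := rieszOfBilin (b.flip.domRestrict M_h)
  have hA : ∀ μ : M_h, β₁ * ‖μ‖ ≤ ‖LinearMap.adjoint (G.domRestrict X_h) μ‖ :=
    fun μ => (hinfsup μ μ.2).trans (sSup_div_norm_le_norm_adjoint b X_h M_h μ)
  obtain ⟨v, hv, hv_norm⟩ := (G.domRestrict X_h).exists_apply_eq_of_le_norm_adjoint hβ₁ hA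
    (G (x - y_h))
  have hG : ‖G (x - y_h)‖ ≤ β₂ * ‖x - y_h‖ :=
    norm_rieszOfBilin_apply_le (b.flip.domRestrict M_h) hβ₂ (fun μ w => hcont w μ) (x - y_h)
  have hsub : x - (y_h + v) = (x - y_h) - v := by abel
  refine ⟨y_h + v, X_h.add_mem hy_h v.2, fun μ hμ => ?_, ?_⟩
  · calc b (x - (y_h + v)) μ = ⟪G (x - (y_h + v)), ⟨μ, hμ⟩⟫ :=
          (inner_rieszOfBilin_apply (b.flip.domRestrict M_h) (x - (y_h + v)) ⟨μ, hμ⟩).symm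
      _ = 0 := by rw [hsub, map_sub, ← hv, LinearMap.domRestrict_apply, sub_self, inner_zero_left]
  · have hv_le : ‖(v : X)‖ ≤ β₂ / β₁ * ‖x - y_h‖ := by
      rw [div_mul_eq_mul_div, le_div_iff₀ hβ₁, mul_comm]
      exact hv_norm.trans hG
    calc ‖x - (y_h + v)‖ ≤ ‖x - y_h‖ + ‖(v : X)‖ := hsub ▸ norm_sub_le _ _
      _ ≤ (1 + β₂ / β₁) * ‖x - y_h‖ := by linarith

end SaddlePoint

theorem constrained_set_approximation_general
    {X M : Type*}
    [NormedAddCommGroup X] [InnerProductSpace ℝ X]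
    [NormedAddCommGroup M] [InnerProductSpace ℝ M]
    (b : X →ₗ[ℝ] M →ₗ[ℝ] ℝ)
    (X_h : Submodule ℝ X) (M_h : Submodule ℝ M)
    [FiniteDimensional ℝ X_h] [FiniteDimensional ℝ M_h]
    (β₁ β₂ : ℝ) (hβ₁ : 0 < β₁) (hβ₂ : 0 < β₂)
    (hcont : ∀ (y : X) (μ : M), |b y μ| ≤ β₂ * ‖y‖ * ‖μ‖)
    (hinfsup : ∀ μ_h ∈ M_h,
      β₁ * ‖μ_h‖ ≤ sSup {r : ℝ | ∃ y_h ∈ X_h, y_h ≠ 0 ∧ r = b y_h μ_h / ‖y_h‖})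
    (x : X) :
    (∀ y_h ∈ X_h, ∃ z_h ∈ X_h,
        (∀ μ_h ∈ M_h, b (x - z_h) μ_h = 0) ∧
        ‖x - z_h‖ ≤ (1 + β₂ / β₁) * ‖x - y_h‖) ∧
    {z_h : X | z_h ∈ X_h ∧ ∀ μ_h ∈ M_h, b (x - z_h) μ_h = 0}.Nonempty ∧
    sInf ((fun z_h => ‖x - z_h‖) ''
        {z_h : X | z_h ∈ X_h ∧ ∀ μ_h ∈ M_h, b (x - z_h) μ_h = 0}) ≤
      (1 + β₂ / β₁) * ⨅ y_h : X_h, ‖x - (y_h : X)‖ := by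
  have approx : ∀ y_h ∈ X_h, ∃ z_h ∈ X_h, (∀ μ_h ∈ M_h, b (x - z_h) μ_h = 0) ∧
      ‖x - z_h‖ ≤ (1 + β₂ / β₁) * ‖x - y_h‖ := fun _ hy_h =>
    exists_mem_forall_eq_zero_norm_sub_le b X_h M_h hβ₁ hβ₂.le hcont hinfsup x hy_h
  obtain ⟨z₀, hz₀, hz₀_eq, -⟩ := approx 0 X_h.zero_mem
  refine ⟨approx, ⟨z₀, hz₀, hz₀_eq⟩,
    sInf_le_mul_iInf_of_forall_exists_le ⟨0, ?_⟩ (by positivity) fun y_h => ?_⟩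
  · rintro _ ⟨z_h, -, rfl⟩
    exact norm_nonneg _
  · obtain ⟨z_h, hz_h, hz_h_eq, hz_h_le⟩ := approx y_h y_h.2
    exact ⟨_, ⟨z_h, ⟨hz_h, hz_h_eq⟩, rfl⟩, hz_h_le⟩

/-- Constrained-set approximation lemma (cf. Braess, Remark 4.10): for every `x` and
every `y_h ∈ X_h` there exists `z_h ∈ X_h` satisfying the discrete constraint
`b(x − z_h, μ_h) = 0` for all `μ_h ∈ M_h` with `‖x − z_h‖ ≤ (1 + β₂/β₁)‖x − y_h‖`;
in particular the discrete constrained set `K_h` is nonempty and the infimum of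
`‖x − z_h‖` over `K_h` is at most `(1 + β₂/β₁)` times the infimum over all of `X_h`. -/
theorem constrained_set_approximation
    {X M : Type*}
    [NormedAddCommGroup X] [InnerProductSpace ℝ X] [CompleteSpace X]
    [NormedAddCommGroup M] [InnerProductSpace ℝ M] [CompleteSpace M]
    (b : X →ₗ[ℝ] M →ₗ[ℝ] ℝ)
    (X_h : Submodule ℝ X) (M_h : Submodule ℝ M)
    [FiniteDimensional ℝ X_h] [FiniteDimensional ℝ M_h]
    (β₁ β₂ : ℝ) (hβ₁ : 0 < β₁) (hβ₂ : 0 < β₂)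
    (hcont : ∀ (y : X) (μ : M), |b y μ| ≤ β₂ * ‖y‖ * ‖μ‖)
    (hinfsup : ∀ μ_h ∈ M_h,
      β₁ * ‖μ_h‖ ≤ sSup {r : ℝ | ∃ y_h ∈ X_h, y_h ≠ 0 ∧ r = b y_h μ_h / ‖y_h‖})
    (x : X) :
    (∀ y_h ∈ X_h, ∃ z_h ∈ X_h,
        (∀ μ_h ∈ M_h, b (x - z_h) μ_h = 0) ∧
        ‖x - z_h‖ ≤ (1 + β₂ / β₁) * ‖x - y_h‖) ∧
    {z_h : X | z_h ∈ X_h ∧ ∀ μ_h ∈ M_h, b (x - z_h) μ_h = 0}.Nonempty ∧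
    sInf ((fun z_h => ‖x - z_h‖) ''
        {z_h : X | z_h ∈ X_h ∧ ∀ μ_h ∈ M_h, b (x - z_h) μ_h = 0}) ≤
      (1 + β₂ / β₁) * ⨅ y_h : X_h, ‖x - (y_h : X)‖ :=
  constrained_set_approximation_general b X_h M_h β₁ β₂ hβ₁ hβ₂ hcont hinfsup x
end
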